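/- arXiv:1912.08114 — 4 statements merged into one kernel-verified Lean document; each statement's English description precedes it below -/
import Mathlib

section
/- Let M be a numerical monoid and m ∈ M satisfying: (i) c_eq(m) > c_adj(m); and (ii) whenever z₁ and z₂ are factorizations of m of the same length l, there exists a factorization z₃ of m of some length q ≠ l such that d(z₁,z₃) < c_eq(m) and d(z₂,z₃) < c_eq(m). Then c_mon(m) > c(m). -/
/-- The length of a factorization. -/
def fLen {k : ℕ} (z : Fin k → ℕ) : ℕ := ∑ i, z i

/-- The distance between two factorizations:
`max{|z|,|z'|} - |gcd(z,z')|` where the gcd is the coordinatewise minimum. -/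
def fDist {k : ℕ} (z z' : Fin k → ℕ) : ℕ :=
  max (fLen z) (fLen z') - ∑ i, min (z i) (z' i)

/-- The set of factorizations of `m` with respect to the generators `n`. -/
def Facts {k : ℕ} (n : Fin k → ℕ) (m : ℕ) : Set (Fin k → ℕ) :=
  {z | ∑ i, z i * n i = m}

/-- `z` and `z'` are joined by an `N`-chain of factorizations of `m`. -/
def Connects {k : ℕ} (n : Fin k → ℕ) (m N : ℕ) (z z' : Fin k → ℕ) : Prop :=
  ∃ t : ℕ, ∃ f : Fin (t + 1) → Fin k → ℕ,
    f 0 = z ∧ f (Fin.last t) = z' ∧ (∀ i, f i ∈ Facts n m) ∧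
    ∀ i : Fin t, fDist (f i.castSucc) (f i.succ) ≤ N

/-- `z` and `z'` are joined by an `N`-chain all of whose terms have length `|z|`. -/
def ConnectsEq {k : ℕ} (n : Fin k → ℕ) (m N : ℕ) (z z' : Fin k → ℕ) : Prop :=
  ∃ t : ℕ, ∃ f : Fin (t + 1) → Fin k → ℕ,
    f 0 = z ∧ f (Fin.last t) = z' ∧ (∀ i, f i ∈ Facts n m) ∧
    (∀ i, fLen (f i) = fLen z) ∧
    ∀ i : Fin t, fDist (f i.castSucc) (f i.succ) ≤ N

/-- `z` and `z'` are joined by a monotone `N`-chain (the lengths are weakly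
increasing or weakly decreasing along the chain). -/
def ConnectsMon {k : ℕ} (n : Fin k → ℕ) (m N : ℕ) (z z' : Fin k → ℕ) : Prop :=
  ∃ t : ℕ, ∃ f : Fin (t + 1) → Fin k → ℕ,
    f 0 = z ∧ f (Fin.last t) = z' ∧ (∀ i, f i ∈ Facts n m) ∧
    (Monotone (fun i => fLen (f i)) ∨ Antitone (fun i => fLen (f i))) ∧
    ∀ i : Fin t, fDist (f i.castSucc) (f i.succ) ≤ N

/-- The catenary degree of an element. -/
noncomputable def catDeg {k : ℕ} (n : Fin k → ℕ) (m : ℕ) : ℕ :=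
  sInf {N | ∀ z ∈ Facts n m, ∀ z' ∈ Facts n m, Connects n m N z z'}

/-- The equivalent catenary degree of an element. -/
noncomputable def catEq {k : ℕ} (n : Fin k → ℕ) (m : ℕ) : ℕ :=
  sInf {N | ∀ z ∈ Facts n m, ∀ z' ∈ Facts n m, fLen z = fLen z' → ConnectsEq n m N z z'}

/-- The monotone catenary degree of an element. -/
noncomputable def catMon {k : ℕ} (n : Fin k → ℕ) (m : ℕ) : ℕ :=
  sInf {N | ∀ z ∈ Facts n m, ∀ z' ∈ Facts n m, ConnectsMon n m N z z'}

/-- The set of lengths of factorizations of `m`. -/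
def LSet {k : ℕ} (n : Fin k → ℕ) (m : ℕ) : Set ℕ := fLen '' Facts n m

/-- Two lengths `a < b` in the length set of `m` are adjacent. -/
def AdjLen {k : ℕ} (n : Fin k → ℕ) (m a b : ℕ) : Prop :=
  a ∈ LSet n m ∧ b ∈ LSet n m ∧ a < b ∧
    ∀ l ∈ LSet n m, a ≤ l → l ≤ b → l = a ∨ l = b

/-- The adjacent catenary degree of an element: the least `N` such that for every
pair of adjacent lengths the minimum distance between the corresponding sets of
factorizations is at most `N`. -/
noncomputable def catAdj {k : ℕ} (n : Fin k → ℕ) (m : ℕ) : ℕ :=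
  sInf {N | ∀ a b : ℕ, AdjLen n m a b →
    ∃ z ∈ Facts n m, ∃ z' ∈ Facts n m, fLen z = a ∧ fLen z' = b ∧ fDist z z' ≤ N}

/-- Set-wise catenary degree: the maximum over all elements of the monoid. -/
noncomputable def catDegM {k : ℕ} (n : Fin k → ℕ) : ℕ := sSup (catDeg n '' {m | (Facts n m).Nonempty})

/-- Set-wise equivalent catenary degree. -/
noncomputable def catEqM {k : ℕ} (n : Fin k → ℕ) : ℕ := sSup (catEq n '' {m | (Facts n m).Nonempty})

/-- Set-wise adjacent catenary degree. -/
noncomputable def catAdjM {k : ℕ} (n : Fin k → ℕ) : ℕ := sSup (catAdj n '' {m | (Facts n m).Nonempty})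

/-- Set-wise monotone catenary degree. -/
noncomputable def catMonM {k : ℕ} (n : Fin k → ℕ) : ℕ := sSup (catMon n '' {m | (Facts n m).Nonempty})


lemma fDist_comm {k : ℕ} (z z' : Fin k → ℕ) : fDist z z' = fDist z' z := by
  unfold fDist
  rw [max_comm]
  congr 1
  exact Finset.sum_congr rfl fun i _ => min_comm _ _

lemma fLen_le_of_mem {k : ℕ} {n : Fin k → ℕ} (hpos : ∀ i, 0 < n i) {m : ℕ}
    {z : Fin k → ℕ} (hz : z ∈ Facts n m) : fLen z ≤ m := by
  calc fLen z = ∑ i, z i := rfl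
    _ ≤ ∑ i, z i * n i := Finset.sum_le_sum fun i _ => Nat.le_mul_of_pos_right _ (hpos i)
    _ = m := hz

lemma fDist_le_m {k : ℕ} {n : Fin k → ℕ} (hpos : ∀ i, 0 < n i) {m : ℕ}
    {z z' : Fin k → ℕ} (hz : z ∈ Facts n m) (hz' : z' ∈ Facts n m) :
    fDist z z' ≤ m :=
  le_trans (Nat.sub_le _ _) (max_le (fLen_le_of_mem hpos hz) (fLen_le_of_mem hpos hz'))

lemma connects_of_chain {k : ℕ} (n : Fin k → ℕ) (m N : ℕ) {z z' : Fin k → ℕ}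
    (hz : z ∈ Facts n m)
    (h : Relation.ReflTransGen
      (fun a b => a ∈ Facts n m ∧ b ∈ Facts n m ∧ fDist a b ≤ N) z z') :
    Connects n m N z z' := by
  induction h with
  | refl => exact ⟨0, fun _ => z, rfl, rfl, fun _ => hz, fun i => i.elim0⟩
  | @tail b c _ hbc ih =>
    obtain ⟨t, f, hf0, hfl, hmem, hd⟩ := ih
    refine ⟨t + 1, Fin.snoc f c, ?_, ?_, ?_, ?_⟩
    · rw [show (0 : Fin (t+2)) = Fin.castSucc 0 from rfl, Fin.snoc_castSucc]; exact hf0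
    · rw [Fin.snoc_last]
    · intro i
      induction i using Fin.lastCases with
      | last => rw [Fin.snoc_last]; exact hbc.2.1
      | cast j => rw [Fin.snoc_castSucc]; exact hmem j
    · intro i
      induction i using Fin.lastCases with
      | last =>
        rw [Fin.snoc_castSucc, Fin.succ_last, Fin.snoc_last, hfl]
        exact hbc.2.2
      | cast j =>
        rw [Fin.snoc_castSucc, Fin.succ_castSucc, Fin.snoc_castSucc]
        exact hd j

/-- If `m` is an element of a numerical monoid with
`c_eq(m) > c_adj(m)`, and any two equal-length factorizations of `m` admit a
factorization of a different length at distance `< c_eq(m)` from both, then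
`c_mon(m) > c(m)`. -/
theorem strict_monotone_gt_catenary_elt {k : ℕ} (n : Fin k → ℕ)
    (hpos : ∀ i, 0 < n i) (hgcd : Finset.univ.gcd n = 1)
    (m : ℕ) (hm : (Facts n m).Nonempty)
    (h1 : catAdj n m < catEq n m)
    (h2 : ∀ z₁ ∈ Facts n m, ∀ z₂ ∈ Facts n m, fLen z₁ = fLen z₂ →
      ∃ z₃ ∈ Facts n m, fLen z₃ ≠ fLen z₁ ∧
        fDist z₁ z₃ < catEq n m ∧ fDist z₂ z₃ < catEq n m) :
    catDeg n m < catMon n m := by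
  set ce := catEq n m with hce
  have hce0 : 0 < ce := lt_of_le_of_lt (Nat.zero_le _) h1
  set N := ce - 1 with hN
  -- the one-step relation
  set R : (Fin k → ℕ) → (Fin k → ℕ) → Prop :=
    fun a b => a ∈ Facts n m ∧ b ∈ Facts n m ∧ fDist a b ≤ N with hR
  have hRsymm : Symmetric R := by
    rintro a b ⟨ha, hb, hd⟩
    exact ⟨hb, ha, by rwa [fDist_comm]⟩
  -- equal-length factorizations are R-connected (two steps through z₃)
  have eqlen : ∀ z ∈ Facts n m, ∀ z' ∈ Facts n m, fLen z = fLen z' →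
      Relation.ReflTransGen R z z' := by
    intro z hz z' hz' hlen
    obtain ⟨z₃, hz₃, _, hd1, hd2⟩ := h2 z hz z' hz' hlen
    have s1 : R z z₃ := ⟨hz, hz₃, Nat.le_pred_of_lt hd1⟩
    have s2 : R z₃ z' := ⟨hz₃, hz', by rw [fDist_comm]; exact Nat.le_pred_of_lt hd2⟩
    exact (Relation.ReflTransGen.single s1).tail s2
  -- the adjacent catenary degree is attained
  have hadj_mem : catAdj n m ∈ {N | ∀ a b : ℕ, AdjLen n m a b →
      ∃ z ∈ Facts n m, ∃ z' ∈ Facts n m, fLen z = a ∧ fLen z' = b ∧ fDist z z' ≤ N} := by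
    apply Nat.sInf_mem
    refine ⟨m, ?_⟩
    rintro a b ⟨⟨z, hz, hza⟩, ⟨z', hz', hz'b⟩, _, _⟩
    exact ⟨z, hz, z', hz', hza, hz'b, fDist_le_m hpos hz hz'⟩
  have hadjN : catAdj n m ≤ N := Nat.le_pred_of_lt h1
  -- cross-length connection by induction on the length gap
  have key : ∀ d : ℕ, ∀ z ∈ Facts n m, ∀ z' ∈ Facts n m,
      fLen z ≤ fLen z' → fLen z' - fLen z = d → Relation.ReflTransGen R z z' := by
    intro d
    induction d using Nat.strong_induction_on with
    | _ d ih =>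
      intro z hz z' hz' hle hd
      rcases eq_or_lt_of_le hle with heq | hlt
      · exact eqlen z hz z' hz' heq
      · set a := fLen z with ha
        set S : Set ℕ := {l | l ∈ LSet n m ∧ a < l} with hS
        have hSne : S.Nonempty := ⟨fLen z', ⟨z', hz', rfl⟩, hlt⟩
        set c := sInf S with hc
        have hcS : c ∈ S := Nat.sInf_mem hSne
        have hcb : c ≤ fLen z' := Nat.sInf_le ⟨⟨z', hz', rfl⟩, hlt⟩
        have hAdj : AdjLen n m a c := by
          refine ⟨⟨z, hz, rfl⟩, hcS.1, hcS.2, ?_⟩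
          intro l hl hal hlc
          rcases eq_or_lt_of_le hal with h | h
          · exact Or.inl h.symm
          · exact Or.inr (le_antisymm hlc (Nat.sInf_le ⟨hl, h⟩))
        obtain ⟨w, hw, w', hw', hwa, hwc, hdw⟩ := hadj_mem a c hAdj
        have chain1 : Relation.ReflTransGen R z w := eqlen z hz w hw hwa.symm
        have step : R w w' := ⟨hw, hw', le_trans hdw hadjN⟩
        have hlt2 : fLen z' - fLen w' < d := by
          subst hd; rw [hwc]
          exact Nat.sub_lt_sub_left hlt hcS.2
        have chain2 : Relation.ReflTransGen R w' z' :=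
          ih _ hlt2 w' hw' z' hz' (hwc ▸ hcb) rfl
        exact (chain1.tail step).trans chain2
  have all : ∀ z ∈ Facts n m, ∀ z' ∈ Facts n m, Relation.ReflTransGen R z z' := by
    intro z hz z' hz'
    rcases le_total (fLen z) (fLen z') with h | h
    · exact key _ z hz z' hz' h rfl
    · exact (@Relation.ReflTransGen.symmetric _ R ⟨hRsymm⟩).symm _ _ (key _ z' hz' z hz h rfl)
  -- catDeg ≤ N
  have hdeg : catDeg n m ≤ N :=
    Nat.sInf_le fun z hz z' hz' => connects_of_chain n m N hz (all z hz z' hz')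
  -- catMon set is nonempty (m works)
  have hmMon : m ∈ {N | ∀ z ∈ Facts n m, ∀ z' ∈ Facts n m, ConnectsMon n m N z z'} := by
    intro z hz z' hz'
    refine ⟨1, ![z, z'], rfl, rfl, ?_, ?_, ?_⟩
    · intro i; fin_cases i <;> assumption
    · rcases le_total (fLen z) (fLen z') with h | h
      · left
        rw [Fin.monotone_iff_le_succ]
        intro i; fin_cases i; exact h
      · right
        rw [Fin.antitone_iff_succ_le]
        intro i; fin_cases i; exact h
    · intro i; fin_cases i; exact fDist_le_m hpos hz hz'
  have hMonMem : catMon n m ∈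
      {N | ∀ z ∈ Facts n m, ∀ z' ∈ Facts n m, ConnectsMon n m N z z'} :=
    Nat.sInf_mem ⟨m, hmMon⟩
  -- catEq ≤ catMon
  have hEqMon : ce ≤ catMon n m := by
    apply Nat.sInf_le
    intro z hz z' hz' hlen
    obtain ⟨t, f, hf0, hfl, hmem, hmono, hd⟩ := hMonMem z hz z' hz'
    refine ⟨t, f, hf0, hfl, hmem, ?_, hd⟩
    intro i
    have h0 : fLen (f 0) = fLen z := by rw [hf0]
    have hl : fLen (f (Fin.last t)) = fLen z := by rw [hfl, hlen]
    rcases hmono with hm' | hm'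
    · exact le_antisymm (hl ▸ hm' (Fin.le_last i)) (h0 ▸ hm' (Fin.zero_le i))
    · exact le_antisymm (h0 ▸ hm' (Fin.zero_le i)) (hl ▸ hm' (Fin.le_last i))
  calc catDeg n m ≤ N := hdeg
    _ < ce := Nat.sub_lt hce0 Nat.one_pos
    _ ≤ catMon n m := hEqMon
end

section
/- Let M = ⟨n₁,n₂,n₃⟩ be a numerical monoid of embedding dimension 3. Then c_eq(M) = (n₃−n₁)/gcd(n₃−n₁, n₂−n₁). -/
lemma mem_facts_iff {n₁ n₂ n₃ m : ℕ} {z : Fin 3 → ℕ} :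
    z ∈ Facts ![n₁,n₂,n₃] m ↔ z 0 * n₁ + z 1 * n₂ + z 2 * n₃ = m := by
  simp [Facts, Fin.sum_univ_three]

lemma fLen3 (z : Fin 3 → ℕ) : fLen z = z 0 + z 1 + z 2 := by
  simp [fLen, Fin.sum_univ_three]

lemma connectsEq_symm {k : ℕ} {n : Fin k → ℕ} {m N : ℕ} {z z' : Fin k → ℕ}
    (h : ConnectsEq n m N z z') : ConnectsEq n m N z' z := by
  obtain ⟨t, f, h0, hl, hF, hL, hD⟩ := h
  have hzz' : fLen z' = fLen z := by rw [← hl]; exact hL _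
  refine ⟨t, fun i => f i.rev, ?_, ?_, fun i => hF _, fun i => by rw [hL _, hzz'], fun i => ?_⟩
  · show f (0 : Fin (t+1)).rev = z'
    rw [Fin.rev_zero, hl]
  · show f (Fin.last t).rev = z
    rw [Fin.rev_last, h0]
  · show fDist (f i.castSucc.rev) (f i.succ.rev) ≤ N
    rw [Fin.rev_castSucc, Fin.rev_succ, fDist_comm]
    exact hD i.rev

/-- Structure lemma: two equal-length factorizations differ by an integer
multiple of the vector (α-β, -α, β). -/
lemma structureLem (n₁ n₂ n₃ α β d m : ℕ) (hd : 0 < d) (hα0 : 0 < α)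
    (hdα : (d:ℤ) * α = (n₃:ℤ) - n₁) (hdβ : (d:ℤ) * β = (n₂:ℤ) - n₁)
    (hco : Nat.Coprime α β)
    (z z' : Fin 3 → ℕ) (hz : z ∈ Facts ![n₁,n₂,n₃] m) (hz' : z' ∈ Facts ![n₁,n₂,n₃] m)
    (hlen : fLen z = fLen z') :
    ∃ t : ℤ, (z' 0 : ℤ) = z 0 + t * ((α:ℤ) - β) ∧ (z' 1 : ℤ) = z 1 - t * α ∧
      (z' 2 : ℤ) = z 2 + t * β := by
  rw [mem_facts_iff] at hz hz'
  rw [fLen3, fLen3] at hlen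
  have h1 : (z 0 : ℤ) * n₁ + z 1 * n₂ + z 2 * n₃ = m := by exact_mod_cast hz
  have h2 : (z' 0 : ℤ) * n₁ + z' 1 * n₂ + z' 2 * n₃ = m := by exact_mod_cast hz'
  have hlenZ : (z 0 : ℤ) + z 1 + z 2 = (z' 0 : ℤ) + z' 1 + z' 2 := by exact_mod_cast hlen
  have hd0 : (d:ℤ) ≠ 0 := by exact_mod_cast hd.ne'
  have hane : (α:ℤ) ≠ 0 := by exact_mod_cast hα0.ne'
  have key2 : ((z' 1 : ℤ) - z 1) * β + ((z' 2 : ℤ) - z 2) * α = 0 := by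
    apply mul_left_cancel₀ hd0
    linear_combination ((z' 1 : ℤ) - z 1) * hdβ + ((z' 2 : ℤ) - z 2) * hdα + h2 - h1
      + (n₁:ℤ) * hlenZ
  have hcop : IsCoprime (α:ℤ) (β:ℤ) := by
    rw [Int.isCoprime_iff_gcd_eq_one, Int.gcd_natCast_natCast]; exact hco
  have hdvd : (α:ℤ) ∣ ((z' 1 : ℤ) - z 1) :=
    hcop.dvd_of_dvd_mul_right ⟨-((z' 2 : ℤ) - z 2), by linear_combination key2⟩
  obtain ⟨t', hbt⟩ := hdvd
  have hc' : (z' 2 : ℤ) - z 2 = -t' * β :=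
    mul_right_cancel₀ hane (by linear_combination key2 - (β:ℤ) * hbt)
  refine ⟨-t', ?_, ?_, ?_⟩
  · linear_combination (-1 : ℤ) * hlenZ - hbt - hc'
  · linear_combination hbt
  · linear_combination hc'

/-- Chain construction: an upward move by `t` copies of the trade vector. -/
lemma chainUp (n₁ n₂ n₃ α β m : ℕ) (hβα : β ≤ α)
    (key : (α:ℤ) * n₂ = ((α:ℤ) - β) * n₁ + β * n₃)
    (z z' : Fin 3 → ℕ) (hz : z ∈ Facts ![n₁,n₂,n₃] m)
    (t : ℕ) (h0 : z' 0 = z 0 + t * (α - β)) (h1 : z 1 = z' 1 + t * α)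
    (h2 : z' 2 = z 2 + t * β) :
    ConnectsEq ![n₁,n₂,n₃] m α z z' := by
  rw [mem_facts_iff] at hz
  have htα : t * α ≤ z 1 := by rw [h1]; exact Nat.le_add_left _ _
  have hsle : ∀ s : Fin (t+1), (s:ℕ) * α ≤ z 1 :=
    fun s => le_trans (Nat.mul_le_mul_right α (Nat.le_of_lt_succ s.2)) htα
  refine ⟨t, fun s => ![z 0 + (s:ℕ) * (α - β), z 1 - (s:ℕ) * α, z 2 + (s:ℕ) * β],
    ?_, ?_, fun s => ?_, fun s => ?_, fun i => ?_⟩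
  · funext j
    fin_cases j <;> simp
  · funext j
    fin_cases j <;> simp [Fin.val_last]
    · exact h0.symm
    · rw [h1, Nat.add_sub_cancel]
    · exact h2.symm
  · rw [mem_facts_iff]
    show (z 0 + (s:ℕ) * (α - β)) * n₁ + (z 1 - (s:ℕ) * α) * n₂ + (z 2 + (s:ℕ) * β) * n₃ = m
    have hzZ : (z 0 : ℤ) * n₁ + z 1 * n₂ + z 2 * n₃ = m := by exact_mod_cast hz
    zify [hβα, hsle s]
    linear_combination hzZ - ((s:ℕ):ℤ) * key
  · show fLen ![z 0 + (s:ℕ) * (α - β), z 1 - (s:ℕ) * α, z 2 + (s:ℕ) * β] = fLen z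
    rw [fLen3, fLen3]
    show z 0 + (s:ℕ) * (α - β) + (z 1 - (s:ℕ) * α) + (z 2 + (s:ℕ) * β) = z 0 + z 1 + z 2
    zify [hβα, hsle s]
    ring
  · have hi : (i.castSucc : ℕ) = (i : ℕ) := rfl
    have hi' : (i.succ : ℕ) = (i : ℕ) + 1 := rfl
    show fDist ![z 0 + (i.castSucc:ℕ) * (α - β), z 1 - (i.castSucc:ℕ) * α, z 2 + (i.castSucc:ℕ) * β]
      ![z 0 + (i.succ:ℕ) * (α - β), z 1 - (i.succ:ℕ) * α, z 2 + (i.succ:ℕ) * β] ≤ α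
    rw [hi, hi']
    have hle1 : ((i:ℕ)+1) * α ≤ z 1 := hsle i.succ
    have hle0 : (i:ℕ) * α ≤ z 1 := hsle i.castSucc
    unfold fDist
    rw [fLen3, fLen3, Fin.sum_univ_three]
    simp only [Matrix.cons_val_zero, Matrix.cons_val_one, Matrix.head_cons,
      Matrix.cons_val_two, Matrix.tail_cons]
    rw [min_eq_left (by exact Nat.add_le_add_left (Nat.mul_le_mul_right _ (Nat.le_succ _)) _),
      min_eq_right (Nat.sub_le_sub_left (Nat.mul_le_mul_right _ (Nat.le_succ _)) _),
      min_eq_left (by exact Nat.add_le_add_left (Nat.mul_le_mul_right _ (Nat.le_succ _)) _)]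
    apply Nat.sub_le_iff_le_add.2
    apply max_le <;> · zify [hβα, hle1, hle0]; linarith [hle1]

/-- Lower bound on the distance between two distinct equal-length
factorizations differing by `t` trade vectors. -/
lemma distLower (α β : ℕ) (hβα : β ≤ α) (a b : Fin 3 → ℕ)
    (hlen : fLen a = fLen b) (t : ℤ) (ht : t ≠ 0)
    (h0 : (b 0 : ℤ) = a 0 + t * ((α:ℤ) - β)) (h1 : (b 1 : ℤ) = a 1 - t * α)
    (h2 : (b 2 : ℤ) = a 2 + t * β) :
    α ≤ fDist a b := by
  unfold fDist
  rw [← hlen, max_self, fLen3, Fin.sum_univ_three]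
  apply Nat.le_sub_of_add_le
  have hm0 : (min (a 0) (b 0) : ℤ) ≤ min (a 0 : ℤ) (b 0 : ℤ) := by push_cast; simp
  zify
  push_cast
  have hβαZ : (0:ℤ) ≤ (α:ℤ) - β := by
    have := hβα; zify at this; linarith
  rcases lt_or_gt_of_ne ht with hneg | hpos
  · -- t ≤ -1
    have htle : t ≤ -1 := by omega
    have k0 : t * ((α:ℤ) - β) ≤ -((α:ℤ) - β) := by nlinarith
    have k2 : t * (β:ℤ) ≤ -(β:ℤ) := by nlinarith [Int.ofNat_nonneg β]
    have := min_le_right (a 0 : ℤ) (b 0 : ℤ)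
    have := min_le_left (a 1 : ℤ) (b 1 : ℤ)
    have := min_le_right (a 2 : ℤ) (b 2 : ℤ)
    linarith
  · -- t ≥ 1
    have htge : 1 ≤ t := hpos
    have k1 : (α:ℤ) ≤ t * α := by nlinarith [Int.ofNat_nonneg α]
    have := min_le_left (a 0 : ℤ) (b 0 : ℤ)
    have := min_le_right (a 1 : ℤ) (b 1 : ℤ)
    have := min_le_left (a 2 : ℤ) (b 2 : ℤ)
    linarith

lemma exists_bad_step {X : Type*} {t : ℕ} (f : Fin (t+1) → X)
    (h : f 0 ≠ f (Fin.last t)) : ∃ i : Fin t, f i.castSucc ≠ f i.succ := by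
  by_contra hc
  push_neg at hc
  apply h
  have : ∀ j : Fin (t+1), f 0 = f j := by
    intro j
    induction j using Fin.induction with
    | zero => rfl
    | succ i ih => rw [ih, hc i]
  exact this _

theorem main_result (n₁ n₂ n₃ : ℕ) (h1 : 0 < n₁)
    (h12 : n₁ < n₂) (h23 : n₂ < n₃) :
    sSup ((fun m => sInf {N | ∀ z ∈ Facts ![n₁,n₂,n₃] m, ∀ z' ∈ Facts ![n₁,n₂,n₃] m,
        fLen z = fLen z' → ConnectsEq ![n₁,n₂,n₃] m N z z'}) '' {m | (Facts ![n₁,n₂,n₃] m).Nonempty})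
      = (n₃ - n₁) / Nat.gcd (n₃ - n₁) (n₂ - n₁) := by
  have h13 : n₁ < n₃ := h12.trans h23
  set d := Nat.gcd (n₃ - n₁) (n₂ - n₁) with hdd
  set α := (n₃ - n₁) / d with hαd
  set β := (n₂ - n₁) / d with hβd
  have hd : 0 < d := Nat.gcd_pos_of_pos_left _ (by omega)
  have hdα : d * α = n₃ - n₁ := Nat.mul_div_cancel' (Nat.gcd_dvd_left _ _)
  have hdβ : d * β = n₂ - n₁ := Nat.mul_div_cancel' (Nat.gcd_dvd_right _ _)
  have hα0 : 0 < α := by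
    rcases Nat.eq_zero_or_pos α with h | h
    · rw [h, Nat.mul_zero] at hdα; omega
    · exact h
  have hβ0 : 0 < β := by
    rcases Nat.eq_zero_or_pos β with h | h
    · rw [h, Nat.mul_zero] at hdβ; omega
    · exact h
  have hβα : β ≤ α := by
    by_contra hcon
    push_neg at hcon
    have := (Nat.mul_lt_mul_left hd).2 hcon
    omega
  have hco : Nat.Coprime α β := Nat.coprime_div_gcd_div_gcd hd
  have hdαZ : (d:ℤ) * α = (n₃:ℤ) - n₁ := by
    have := hdα; zify [h13.le] at this; linarith
  have hdβZ : (d:ℤ) * β = (n₂:ℤ) - n₁ := by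
    have := hdβ; zify [h12.le] at this; linarith
  have keyZ : (α:ℤ) * n₂ = ((α:ℤ) - β) * n₁ + β * n₃ := by
    apply mul_left_cancel₀ (show (d:ℤ) ≠ 0 by exact_mod_cast hd.ne')
    linear_combination ((n₂:ℤ) - n₁) * hdαZ + ((n₁:ℤ) - n₃) * hdβZ
  -- upper bound: any two equal-length factorizations connect with α
  have hub : ∀ m : ℕ, ∀ z ∈ Facts ![n₁,n₂,n₃] m, ∀ z' ∈ Facts ![n₁,n₂,n₃] m,
      fLen z = fLen z' → ConnectsEq ![n₁,n₂,n₃] m α z z' := by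
    intro m z hz z' hz' hlen
    obtain ⟨t, e0, e1, e2⟩ := structureLem n₁ n₂ n₃ α β d m hd hα0 hdαZ hdβZ hco z z' hz hz' hlen
    rcases le_or_gt 0 t with hpos | hneg
    · set tn := t.toNat with htn
      have htt : (tn : ℤ) = t := Int.toNat_of_nonneg hpos
      apply chainUp n₁ n₂ n₃ α β m hβα keyZ z z' hz tn
      · zify [hβα]; rw [htt]; linarith [e0]
      · zify; rw [htt]; linarith [e1]
      · zify; rw [htt]; linarith [e2]
    · apply connectsEq_symm
      set tn := (-t).toNat with htn
      have htt : (tn : ℤ) = -t := Int.toNat_of_nonneg (by omega)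
      apply chainUp n₁ n₂ n₃ α β m hβα keyZ z' z hz' tn
      · zify [hβα]; rw [htt]; linarith [e0]
      · zify; rw [htt]; linarith [e1]
      · zify; rw [htt]; linarith [e2]
  -- the witness element m₀ = α * n₂
  set m₀ := α * n₂ with hm₀
  set zs : Fin 3 → ℕ := ![α - β, 0, β] with hzs
  set ws : Fin 3 → ℕ := ![0, α, 0] with hws
  have hzsF : zs ∈ Facts ![n₁,n₂,n₃] m₀ := by
    rw [mem_facts_iff]
    show (α - β) * n₁ + 0 * n₂ + β * n₃ = m₀
    rw [hm₀]
    zify [hβα]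
    linear_combination -keyZ
  have hwsF : ws ∈ Facts ![n₁,n₂,n₃] m₀ := by
    rw [mem_facts_iff]
    show 0 * n₁ + α * n₂ + 0 * n₃ = m₀
    rw [hm₀]
    ring
  have hzlen : fLen zs = α := by
    rw [fLen3]; show α - β + 0 + β = α; omega
  have hwlen : fLen ws = α := by
    rw [fLen3]; show 0 + α + 0 = α; omega
  have hzw : zs ≠ ws := by
    intro hcon
    have : zs 1 = ws 1 := by rw [hcon]
    simp [hzs, hws] at this
    omega
  -- lower bound at m₀
  have hlow : ∀ N, (∀ z ∈ Facts ![n₁,n₂,n₃] m₀, ∀ z' ∈ Facts ![n₁,n₂,n₃] m₀,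
      fLen z = fLen z' → ConnectsEq ![n₁,n₂,n₃] m₀ N z z') → α ≤ N := by
    intro N hN
    obtain ⟨t, f, hf0, hfl, hfF, hfL, hfD⟩ :=
      hN zs hzsF ws hwsF (by rw [hzlen, hwlen])
    obtain ⟨i, hi⟩ := exists_bad_step f (by rw [hf0, hfl]; exact hzw)
    have hlen : fLen (f i.castSucc) = fLen (f i.succ) := by rw [hfL, hfL]
    obtain ⟨s, e0, e1, e2⟩ := structureLem n₁ n₂ n₃ α β d m₀ hd hα0 hdαZ hdβZ hco
      (f i.castSucc) (f i.succ) (hfF _) (hfF _) hlen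
    have hs0 : s ≠ 0 := by
      intro hcon
      subst hcon
      apply hi
      funext j
      simp only [zero_mul, mul_zero, add_zero, sub_zero] at e0 e1 e2
      fin_cases j
      · exact_mod_cast e0.symm
      · exact_mod_cast e1.symm
      · exact_mod_cast e2.symm
    calc α ≤ fDist (f i.castSucc) (f i.succ) :=
            distLower α β hβα _ _ hlen s hs0 e0 e1 e2
      _ ≤ N := hfD i
  -- compute catEq m₀ = α, and catEq m ≤ α for all m
  have hSm : ∀ m, α ∈ {N | ∀ z ∈ Facts ![n₁,n₂,n₃] m, ∀ z' ∈ Facts ![n₁,n₂,n₃] m,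
      fLen z = fLen z' → ConnectsEq ![n₁,n₂,n₃] m N z z'} := fun m => hub m
  have hcatle : ∀ m, sInf {N | ∀ z ∈ Facts ![n₁,n₂,n₃] m, ∀ z' ∈ Facts ![n₁,n₂,n₃] m,
      fLen z = fLen z' → ConnectsEq ![n₁,n₂,n₃] m N z z'} ≤ α := fun m => Nat.sInf_le (hSm m)
  have hcat₀ : sInf {N | ∀ z ∈ Facts ![n₁,n₂,n₃] m₀, ∀ z' ∈ Facts ![n₁,n₂,n₃] m₀,
      fLen z = fLen z' → ConnectsEq ![n₁,n₂,n₃] m₀ N z z'} = α := by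
    refine le_antisymm (hcatle m₀) (le_csInf ⟨α, hSm m₀⟩ ?_)
    intro N hNmem
    exact hlow N hNmem
  -- conclude sSup = α
  have hne : ((fun m => sInf {N | ∀ z ∈ Facts ![n₁,n₂,n₃] m, ∀ z' ∈ Facts ![n₁,n₂,n₃] m,
      fLen z = fLen z' → ConnectsEq ![n₁,n₂,n₃] m N z z'}) ''
      {m | (Facts ![n₁,n₂,n₃] m).Nonempty}).Nonempty :=
    ⟨_, Set.mem_image_of_mem _ (⟨ws, hwsF⟩ : (Facts ![n₁,n₂,n₃] m₀).Nonempty)⟩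
  apply le_antisymm
  · apply csSup_le hne
    rintro x ⟨m, hm, rfl⟩
    exact hcatle m
  · apply le_csSup
    · refine ⟨α, ?_⟩
      rintro x ⟨m, hm, rfl⟩
      exact hcatle m
    · exact ⟨m₀, ⟨ws, hwsF⟩, hcat₀⟩


/-- In an embedding dimension 3 numerical monoid
`⟨n₁,n₂,n₃⟩`, `c_eq(M) = (n₃-n₁)/gcd(n₃-n₁, n₂-n₁)`. -/
theorem ed3_equivalent_catenary (n₁ n₂ n₃ : ℕ) (h1 : 0 < n₁)
    (h12 : n₁ < n₂) (h23 : n₂ < n₃)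
    (hgcd : Nat.gcd (Nat.gcd n₁ n₂) n₃ = 1)
    (hmin1 : ¬ ∃ u v : ℕ, u * n₂ + v * n₃ = n₁)
    (hmin2 : ¬ ∃ u v : ℕ, u * n₁ + v * n₃ = n₂)
    (hmin3 : ¬ ∃ u v : ℕ, u * n₁ + v * n₂ = n₃) :
    catEqM ![n₁, n₂, n₃] = (n₃ - n₁) / Nat.gcd (n₃ - n₁) (n₂ - n₁) := by
  simp only [catEqM, catEq]
  exact main_result n₁ n₂ n₃ h1 h12 h23
end

section
/- Let n, a, x be positive integers with a ≥ 2 and x ≥ 2, and let M = ⟨na, na+n, 2na+nx+1⟩ be a numerical monoid of embedding dimension 3 with these generators minimal. Let m ∈ M and suppose z = (b,c,d) and z₁ = (b + na+nx+1−n, c − (na+nx+1), d + n) are both factorizations of m (so they have equal length l = b+c+d and z₁ is obtained from z by the minimal length-preserving move). Then z₂ := (b + nx+1−2n, c − (nx+1), d + n) is also a factorization of m, of length l − n, and d(z, z₂) = nx + 1 and d(z₁, z₂) = na + n. -/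
/-- The generators `na, na+n, 2na+nx+1`. -/
def G (n a x : ℕ) : Fin 3 → ℕ := ![n * a, n * a + n, 2 * n * a + n * x + 1]


/-- For `M = ⟨na, na+n, 2na+nx+1⟩` with `a, x ≥ 2`: if
`z = (b,c,d)` and `z₁ = (b + na+nx+1-n, c - (na+nx+1), d + n)` are both
factorizations of `m` (of equal length `l = b+c+d`), then
`z₂ = (b + nx+1-2n, c - (nx+1), d + n)` is also a factorization of `m`, of
length `l - n`, with `d(z,z₂) = nx+1` and `d(z₁,z₂) = na+n`. -/
theorem family_step_down (n a x : ℕ) (hn : 0 < n) (ha : 2 ≤ a) (hx : 2 ≤ x)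
    (hmin : ¬ ∃ u v : ℕ, u * (n * a) + v * (n * a + n) = 2 * n * a + n * x + 1)
    (m b c d : ℕ) (hc : n * a + n * x + 1 ≤ c)
    (hz : ![b, c, d] ∈ Facts (G n a x) m)
    (hz₁ : ![b + (n * a + n * x + 1 - n), c - (n * a + n * x + 1), d + n]
      ∈ Facts (G n a x) m) :
    ![b + (n * x + 1 - 2 * n), c - (n * x + 1), d + n] ∈ Facts (G n a x) m ∧
    fLen ![b + (n * x + 1 - 2 * n), c - (n * x + 1), d + n] = b + c + d - n ∧
    fDist ![b, c, d] ![b + (n * x + 1 - 2 * n), c - (n * x + 1), d + n]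
      = n * x + 1 ∧
    fDist ![b + (n * a + n * x + 1 - n), c - (n * a + n * x + 1), d + n]
      ![b + (n * x + 1 - 2 * n), c - (n * x + 1), d + n] = n * a + n := by
  clear hz₁ hmin
  have h2n : n * 2 ≤ n * x := Nat.mul_le_mul_left n hx
  obtain ⟨k, hk⟩ : ∃ k, n * x + 1 = k + 2 * n := ⟨n * x + 1 - 2 * n, by omega⟩
  rw [add_assoc (n*a), hk] at hc
  obtain ⟨c', hc'⟩ : ∃ c', c = c' + n * a + k + 2 * n :=
    ⟨c - (n * a + k + 2 * n), by generalize n * a = A at hc ⊢; omega⟩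
  subst hc'
  simp only [Facts, Set.mem_setOf_eq, Fin.sum_univ_three, G, fLen, fDist,
    Matrix.cons_val_zero, Matrix.cons_val_one, Matrix.head_cons,
    Matrix.cons_val_two, Matrix.tail_cons] at hz ⊢
  have hg : 2 * n * a + n * x + 1 = 2 * n * a + (k + 2 * n) := by
    rw [add_assoc, hk]
  have ha1 : n * a + n * x + 1 = n * a + (k + 2 * n) := by
    rw [add_assoc, hk]
  rw [hg] at hz ⊢
  rw [ha1, hk]
  have e1 : k + 2 * n - 2 * n = k := by omega
  have e2 : c' + n * a + k + 2 * n - (k + 2 * n) = c' + n * a := by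
    generalize n * a = A; omega
  have e3 : c' + n * a + k + 2 * n - (n * a + (k + 2 * n)) = c' := by
    generalize n * a = A; omega
  have e4 : n * a + (k + 2 * n) - n = n * a + k + n := by
    generalize n * a = A; omega
  rw [e1, e2, e3, e4]
  refine ⟨by rw [← hz]; ring, ?_, ?_, ?_⟩ <;>
    · clear hz hc; generalize n * a = A; omega
end

section
/- For each integer a ≥ 4, let M_a = ⟨a, a+1, a²−a−1⟩ (here a²−a−1 is the Frobenius number of ⟨a, a+1⟩, so M_a is a numerical monoid of embedding dimension 3). Then c_mon(M_a) = a² − 2a − 1 and c(M_a) = 2a − 3. In particular, c_mon(M_a) − c(M_a) = a² − 4a + 2, so for every N ∈ ℕ there exists a numerical monoid M with c_mon(M) − c(M) > N: the difference between the monotone and regular catenary degrees can be arbitrarily large. -/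
/-- The generators `a, a+1, a² - a - 1` (the last is the Frobenius number of
`⟨a, a+1⟩`). -/
def G19 (a : ℕ) : Fin 3 → ℕ := ![a, a + 1, a * a - a - 1]

namespace Cat19

open Relation

/-- Generic conversion from a refl-trans-gen path to a `Fin`-indexed chain. -/
theorem chain_of_rtg {α : Type*} {P : α → Prop} {Q : α → α → Prop} {z z' : α} (hz : P z)
    {R : α → α → Prop} (hR : ∀ u v, R u v → P v ∧ Q u v)
    (h : Relation.ReflTransGen R z z') :
    ∃ t : ℕ, ∃ f : Fin (t+1) → α, f 0 = z ∧ f (Fin.last t) = z' ∧ (∀ i, P (f i)) ∧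
      ∀ i : Fin t, Q (f i.castSucc) (f i.succ) := by
  induction h with
  | refl => exact ⟨0, fun _ => z, rfl, rfl, fun _ => hz, fun i => i.elim0⟩
  | @tail b c hab hbc ih =>
    obtain ⟨t, f, h0, hl, hP, hQ⟩ := ih
    refine ⟨t+1, Fin.snoc f c, ?_, ?_, ?_, ?_⟩
    · rw [show (0 : Fin (t+2)) = Fin.castSucc 0 from rfl, Fin.snoc_castSucc, h0]
    · rw [Fin.snoc_last]
    · intro i
      induction i using Fin.lastCases with
      | last => rw [Fin.snoc_last]; exact (hR _ _ hbc).1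
      | cast j => rw [Fin.snoc_castSucc]; exact hP j
    · intro i
      induction i using Fin.lastCases with
      | last =>
        rw [Fin.succ_last, Fin.snoc_last, Fin.snoc_castSucc, hl]
        exact (hR _ _ hbc).2
      | cast j =>
        rw [Fin.succ_castSucc, Fin.snoc_castSucc, Fin.snoc_castSucc]
        exact hQ j

theorem fDist_comm {k : ℕ} (z z' : Fin k → ℕ) : fDist z z' = fDist z' z := by
  unfold fDist
  rw [max_comm]
  congr 1
  exact Finset.sum_congr rfl (fun i _ => min_comm _ _)

/-- The step relation used for (monotone, increasing) chains. -/
abbrev Rel {k : ℕ} (n : Fin k → ℕ) (m N : ℕ) (u v : Fin k → ℕ) : Prop :=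
  u ∈ Facts n m ∧ v ∈ Facts n m ∧ fDist u v ≤ N ∧ fLen u ≤ fLen v

/-- The step relation used for plain chains. -/
abbrev RelS {k : ℕ} (n : Fin k → ℕ) (m N : ℕ) (u v : Fin k → ℕ) : Prop :=
  u ∈ Facts n m ∧ v ∈ Facts n m ∧ fDist u v ≤ N

theorem RelS_symm {k : ℕ} (n : Fin k → ℕ) (m N : ℕ) : Symmetric (RelS n m N) := by
  intro u v ⟨h1, h2, h3⟩
  exact ⟨h2, h1, by rwa [fDist_comm]⟩

theorem rel_relS {k : ℕ} {n : Fin k → ℕ} {m N : ℕ} {u v : Fin k → ℕ} :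
    Rel n m N u v → RelS n m N u v := fun ⟨h1, h2, h3, _⟩ => ⟨h1, h2, h3⟩

theorem connects_of_rtg {k : ℕ} {n : Fin k → ℕ} {m N : ℕ} {z z' : Fin k → ℕ}
    (hz : z ∈ Facts n m) (h : ReflTransGen (RelS n m N) z z') : Connects n m N z z' := by
  obtain ⟨t, f, h0, hl, hP, hQ⟩ :=
    chain_of_rtg (P := (· ∈ Facts n m)) (Q := fun u v => fDist u v ≤ N) hz
      (fun u v hr => ⟨hr.2.1, hr.2.2⟩) h
  exact ⟨t, f, h0, hl, hP, hQ⟩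

theorem connectsMon_of_rtg {k : ℕ} {n : Fin k → ℕ} {m N : ℕ} {z z' : Fin k → ℕ}
    (hz : z ∈ Facts n m) (h : ReflTransGen (Rel n m N) z z') : ConnectsMon n m N z z' := by
  obtain ⟨t, f, h0, hl, hP, hQ⟩ :=
    chain_of_rtg (P := (· ∈ Facts n m))
      (Q := fun u v => fDist u v ≤ N ∧ fLen u ≤ fLen v) hz
      (fun u v hr => ⟨hr.2.1, hr.2.2⟩) h
  refine ⟨t, f, h0, hl, hP, Or.inl ?_, fun i => (hQ i).1⟩
  rw [Fin.monotone_iff_le_succ]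
  exact fun i => (hQ i).2

theorem connectsMon_symm {k : ℕ} {n : Fin k → ℕ} {m N : ℕ} {z z' : Fin k → ℕ}
    (h : ConnectsMon n m N z z') : ConnectsMon n m N z' z := by
  obtain ⟨t, f, h0, hl, hP, hM, hQ⟩ := h
  refine ⟨t, fun i => f i.rev, ?_, ?_, fun i => hP _, ?_, fun i => ?_⟩
  · show f (Fin.rev 0) = z'
    rw [Fin.rev_zero, hl]
  · show f (Fin.last t).rev = z
    rw [Fin.rev_last, h0]
  · rcases hM with hM | hM
    · exact Or.inr (fun i j hij => hM (Fin.rev_le_rev.mpr hij))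
    · exact Or.inl (fun i j hij => hM (Fin.rev_le_rev.mpr hij))
  · show fDist (f i.castSucc.rev) (f i.succ.rev) ≤ N
    rw [Fin.rev_castSucc, Fin.rev_succ, fDist_comm]
    exact hQ i.rev

end Cat19

namespace Cat19

open Relation

/-- Explicit factorization triple. -/
def V (x y w : ℕ) : Fin 3 → ℕ := ![x, y, w]

theorem eta3 (z : Fin 3 → ℕ) : z = V (z 0) (z 1) (z 2) := by
  funext i
  fin_cases i <;> rfl

theorem len_V (x y w : ℕ) : fLen (V x y w) = x + y + w := by
  simp [fLen, V, Fin.sum_univ_three]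

theorem dist_V (x y w x' y' w' : ℕ) :
    fDist (V x y w) (V x' y' w') =
      max (x+y+w) (x'+y'+w') - (min x x' + min y y' + min w w') := by
  simp [fDist, fLen, V, Fin.sum_univ_three]

section Core

variable {a c ls m : ℕ}

theorem mem_facts (hc : c + (a + 1) = a * a) {x y w : ℕ} :
    V x y w ∈ Facts (G19 a) m ↔ x*a + y*(a+1) + w*c = m := by
  have h1 : a * a - a - 1 = c := by omega
  simp [Facts, V, G19, Fin.sum_univ_three, h1]

theorem norep (ha : 4 ≤ a) (hc : c + (a + 1) = a * a) (x y : ℕ) :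
    x*a + y*(a+1) ≠ c := by
  intro h
  have hs : (x+y)*a + y = c := by rw [← h]; ring
  obtain ⟨P, hP⟩ : ∃ P, (x+y)*a = P := ⟨_, rfl⟩
  rw [hP] at hs
  rcases le_or_gt (x + y) (a - 2) with h1 | h1
  · have h2 : (x+y)*a ≤ (a-2)*a := Nat.mul_le_mul_right a h1
    have h3 : (a-2)*a + 2*a = a*a := by
      zify [show 2 ≤ a by omega]; ring
    obtain ⟨Q, hQ⟩ : ∃ Q, (a-2)*a = Q := ⟨_, rfl⟩
    rw [hP, hQ] at h2; rw [hQ] at h3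
    omega
  · have h2 : (a-1)*a ≤ (x+y)*a := Nat.mul_le_mul_right a (by omega)
    have h3 : (a-1)*a + a = a*a := by
      zify [show 1 ≤ a by omega]; ring
    obtain ⟨Q, hQ⟩ : ∃ Q, (a-1)*a = Q := ⟨_, rfl⟩
    rw [hP, hQ] at h2; rw [hQ] at h3
    omega

/-- Same-level, equal data implies equality of coordinates. -/
theorem ground_eq {x y x' y' w : ℕ}
    (hm : x*a + y*(a+1) + w*c = m) (hm' : x'*a + y'*(a+1) + w*c = m)
    (hs : x' + y' = x + y) : x = x' ∧ y = y' := by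
  have hE : (x:ℤ)*a + y*(a+1) + w*c = x'*a + y'*(a+1) + w*c := by
    exact_mod_cast hm.trans hm'.symm
  have hS : (x':ℤ) + y' = x + y := by exact_mod_cast hs
  have hy : (y:ℤ) = y' := by linear_combination hE + (a:ℤ) * hS
  have hy' : y = y' := by exact_mod_cast hy
  omega

/-- Within-level trades: increasing chain of `(x,y) → (x+(a+1), y-a)` steps. -/
theorem trades (ha : 4 ≤ a) (hc : c + (a + 1) = a * a) {N : ℕ} (hN : a + 1 ≤ N) :
    ∀ Δ : ℕ, ∀ x y x' y' w : ℕ,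
      (x*a + y*(a+1) + w*c = m) → (x'*a + y'*(a+1) + w*c = m) →
      (x' + y' = x + y + Δ) →
      ReflTransGen (Rel (G19 a) m N) (V x y w) (V x' y' w) := by
  intro Δ
  induction Δ with
  | zero =>
    intro x y x' y' w hm hm' hs
    obtain ⟨hx, hy⟩ := ground_eq hm hm' (by omega)
    rw [hx, hy]
  | succ Δ ih =>
    intro x y x' y' w hm hm' hs
    have hyz : (y:ℤ) = y' + a*(Δ+1) := by
      have hmZ : (x:ℤ)*a + y*(a+1) + w*c = m := by exact_mod_cast hm
      have hm'Z : (x':ℤ)*a + y'*(a+1) + w*c = m := by exact_mod_cast hm'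
      have hsZ : (x':ℤ) + y' = x + y + (Δ+1) := by exact_mod_cast hs
      linear_combination hmZ - hm'Z + (a:ℤ)*hsZ
    have hyn : y = y' + (a*Δ + a) := by
      have : y = y' + a*(Δ+1) := by exact_mod_cast hyz
      have h2 : a*(Δ+1) = a*Δ + a := by ring
      omega
    have hay : a ≤ y := by omega
    have hmem2 : (x + (a+1))*a + (y - a)*(a+1) + w*c = m := by
      zify [hay]
      have hmZ : (x:ℤ)*a + y*(a+1) + w*c = m := by exact_mod_cast hm
      linear_combination hmZ
    refine ReflTransGen.head ?_ (ih (x+(a+1)) (y-a) x' y' w hmem2 hm' (by omega))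
    refine ⟨(mem_facts hc).mpr hm, (mem_facts hc).mpr hmem2, ?_, ?_⟩
    · rw [dist_V]; omega
    · rw [len_V, len_V]; omega

end Core

end Cat19

namespace Cat19

open Relation

set_option maxHeartbeats 1000000

section Core2

variable {a c ls m : ℕ}

/-- Raise the level by one, keeping the length, heading towards a factorization
with a higher level. -/
theorem raise_step (ha : 4 ≤ a) (hc : c + (a + 1) = a * a) (hls : c = ls + a)
    {x y w x' y' w' : ℕ}
    (hm : x*a + y*(a+1) + w*c = m) (hm' : x'*a + y'*(a+1) + w'*c = m)
    (hw : w < w') (hL : x+y+w ≤ x'+y'+w') :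
    (x + (ls-1))*a + (y - ls)*(a+1) + (w+1)*c = m ∧
    (x + (ls-1)) + (y - ls) + (w+1) = x + y + w ∧
    Rel (G19 a) m ls (V x y w) (V (x + (ls-1)) (y - ls) (w+1)) := by
  have h4a : 4*a ≤ a*a := Nat.mul_le_mul_right a ha
  have hls2 : 2*a ≤ ls + 1 := by omega
  have hmZ : (x:ℤ)*a + y*(a+1) + w*c = m := by exact_mod_cast hm
  have hm'Z : (x':ℤ)*a + y'*(a+1) + w'*c = m := by exact_mod_cast hm'
  have hclsZ : (c:ℤ) = ls + a := by exact_mod_cast hls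
  have hyid : (y:ℤ) = y' + a*(((x':ℤ)+y'+w') - ((x:ℤ)+y+w)) + ((w':ℤ) - w)*((c:ℤ) - a) := by
    linear_combination hmZ - hm'Z
  have hXpos : (0:ℤ) ≤ ((x':ℤ)+y'+w') - ((x:ℤ)+y+w) := by
    have : (x:ℤ)+y+w ≤ (x':ℤ)+y'+w' := by exact_mod_cast hL
    linarith
  have hW1 : (1:ℤ) ≤ (w':ℤ) - w := by
    have : (w:ℤ) < w' := by exact_mod_cast hw
    linarith
  have hyls : ls ≤ y := by
    have h1 : (0:ℤ) ≤ (a:ℤ)*(((x':ℤ)+y'+w') - ((x:ℤ)+y+w)) :=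
      mul_nonneg (by positivity) hXpos
    have h2 : ((c:ℤ) - a) ≤ ((w':ℤ) - w)*((c:ℤ) - a) :=
      le_mul_of_one_le_left (by linarith) hW1
    have : (ls:ℤ) ≤ y := by
      have hy' : (0:ℤ) ≤ y' := by positivity
      linarith
    exact_mod_cast this
  have hls1 : 1 ≤ ls := by omega
  have hmem : (x + (ls-1))*a + (y - ls)*(a+1) + (w+1)*c = m := by
    zify [hyls, hls1]
    linear_combination hmZ + hclsZ
  refine ⟨hmem, by omega, (mem_facts hc).mpr hm, (mem_facts hc).mpr hmem, ?_, ?_⟩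
  · rw [dist_V]; omega
  · rw [len_V, len_V]; omega

/-- Lower the level by one or two, increasing the length but not beyond the
target length, heading towards a factorization with a lower level. -/
theorem lower_step (ha : 4 ≤ a) (hc : c + (a + 1) = a * a) (hls : c = ls + a)
    {x y w x' y' w' : ℕ}
    (hm : x*a + y*(a+1) + w*c = m) (hm' : x'*a + y'*(a+1) + w'*c = m)
    (hw : w' < w) (hL : x+y+w ≤ x'+y'+w') :
    ∃ x1 y1 w1 : ℕ, (x1*a + y1*(a+1) + w1*c = m) ∧ w' ≤ w1 ∧ w1 < w ∧
      x+y+w ≤ x1+y1+w1 ∧ x1+y1+w1 ≤ x'+y'+w' ∧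
      Rel (G19 a) m ls (V x y w) (V x1 y1 w1) := by
  have h4a : 4*a ≤ a*a := Nat.mul_le_mul_right a ha
  have hls2 : 2*a ≤ ls + 1 := by omega
  have hmZ : (x:ℤ)*a + y*(a+1) + w*c = m := by exact_mod_cast hm
  have hm'Z : (x':ℤ)*a + y'*(a+1) + w'*c = m := by exact_mod_cast hm'
  have hclsZ : (c:ℤ) = ls + a := by exact_mod_cast hls
  have hcZ : (c:ℤ) + (a+1) = (a:ℤ)*a := by exact_mod_cast hc
  have hxid : (x':ℤ) = x + ((a:ℤ)+1)*(((x':ℤ)+y'+w') - ((x:ℤ)+y+w))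
      - ((w:ℤ) - w')*((ls:ℤ) - 1) := by
    linear_combination hmZ - hm'Z - ((w:ℤ) - (w':ℤ)) * hclsZ
  have hXpos : (0:ℤ) ≤ ((x':ℤ)+y'+w') - ((x:ℤ)+y+w) := by
    have : (x:ℤ)+y+w ≤ (x':ℤ)+y'+w' := by exact_mod_cast hL
    linarith
  have hJ1 : (1:ℤ) ≤ (w:ℤ) - w' := by
    have : (w':ℤ) < w := by exact_mod_cast hw
    linarith
  have hx'0 : (0:ℤ) ≤ (x':ℤ) := by positivity
  by_cases hxy : x = 0 ∧ y = 0
  · -- special case : m = w * c, jump two levels down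
    obtain ⟨hx0, hy0⟩ := hxy
    subst hx0; subst hy0
    -- w' + 2 ≤ w
    have hw2 : w' + 2 ≤ w := by
      by_contra hcon
      have hw1 : w' = w - 1 := by omega
      have h1 : (w-1)*c + c = w*c := by
        have h1w : 1 ≤ w := by omega
        zify [h1w]; ring
      have h2 : x'*a + y'*(a+1) = c := by
        rw [hw1] at hm'; omega
      exact norep ha hc x' y' h2
    have hmem : (a-1)*a + (a-2)*(a+1) + (w-2)*c = m := by
      zify [show 1 ≤ a by omega, show 2 ≤ a by omega, show 2 ≤ w by omega]
      linear_combination hmZ - 2*hcZ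
    -- length bound : x'+y'+w' ≥ w + 2a - 5
    have hLbound : (2*a:ℤ) - 5 + w ≤ (x':ℤ)+y'+w' := by
      by_contra hcon
      push_neg at hcon
      have hXle : ((x':ℤ)+y'+w') - ((0:ℤ)+0+w) ≤ 2*(a:ℤ) - 6 := by push_cast; linarith
      have hp1 : ((a:ℤ)+1)*(((x':ℤ)+y'+w') - ((0:ℤ)+0+w)) ≤ ((a:ℤ)+1)*(2*(a:ℤ)-6) :=
        mul_le_mul_of_nonneg_left hXle (by positivity)
      have hp2 : (2:ℤ)*((ls:ℤ)-1) ≤ ((w:ℤ) - w')*((ls:ℤ) - 1) := by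
        apply mul_le_mul_of_nonneg_right _ (by
          have h7 : 7 ≤ ls := by omega
          have h7' : (7:ℤ) ≤ (ls:ℤ) := by exact_mod_cast h7
          linarith)
        have : ((w':ℤ)) + 2 ≤ w := by exact_mod_cast hw2
        linarith
      have e1 : ((a:ℤ)+1)*(2*(a:ℤ)-6) = 2*((a:ℤ)*a) - 4*a - 6 := by ring
      linarith [hxid, hx'0]
    have hLb : w + 2*a ≤ x'+y'+w' + 5 := by
      have h9 : ((w:ℤ)) + 2*(a:ℤ) ≤ ((x':ℤ)+y'+w') + 5 := by linarith
      exact_mod_cast h9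
    exact ⟨a-1, a-2, w-2, hmem, by omega, by omega, by omega, by omega,
      (mem_facts hc).mpr hm, (mem_facts hc).mpr hmem, by rw [dist_V]; omega,
      by rw [len_V, len_V]; omega⟩
  · -- main case
    have hw1 : 1 ≤ w := by omega
    set δ := ((ls - 1 - x) + a) / (a+1) with hδ
    have hdm := Nat.div_add_mod ((ls - 1 - x) + a) (a+1)
    have hmod := Nat.mod_lt ((ls - 1 - x) + a) (show 0 < a+1 by omega)
    rw [← hδ] at hdm
    obtain ⟨r, hr⟩ : ∃ r, ((ls - 1 - x) + a) % (a+1) = r := ⟨_, rfl⟩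
    rw [hr] at hdm hmod
    clear_value δ
    clear hδ hr
    obtain ⟨B, hB⟩ : ∃ B, (a+1)*δ = B := ⟨_, rfl⟩
    obtain ⟨A, hA⟩ : ∃ A, a*δ = A := ⟨_, rfl⟩
    have hBA : B = A + δ := by rw [← hB, ← hA]; ring
    rw [hB] at hdm
    have hf1 : ls - 1 - x ≤ B ∧ B ≤ (ls - 1 - x) + a := by omega
    have hf2 : δ ≤ a - 2 := by
      by_contra hcon
      have h1 : (a+1)*(a-1) ≤ (a+1)*δ := Nat.mul_le_mul_left (a+1) (by omega)
      have h2 : (a+1)*(a-1) + 1 = a*a := by zify [show 1 ≤ a by omega]; ring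
      rw [hB] at h1
      omega
    have hf34 : A ≤ y + ls ∧ A ≤ ls + 1 := by
      rcases le_or_gt δ (a-3) with h1 | h1
      · have h2 : a*δ ≤ a*(a-3) := Nat.mul_le_mul_left a h1
        have h3 : a*(a-3) + 3*a = a*a := by zify [show 3 ≤ a by omega]; ring
        rw [hA] at h2
        omega
      · have hδval : δ = a - 2 := by omega
        have h2 : (a+1)*(a-2) + a + 2 = a*a := by zify [show 2 ≤ a by omega]; ring
        have hBval : B = (a+1)*(a-2) := by rw [← hB, hδval]
        have hx0 : x = 0 := by omega
        have hy1 : 1 ≤ y := by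
          rcases Nat.eq_zero_or_pos y with h | h
          · exact absurd ⟨hx0, h⟩ hxy
          · exact h
        have h3 : a*(a-2) + 2*a = a*a := by zify [show 2 ≤ a by omega]; ring
        have hAval : A = a*(a-2) := by rw [← hA, hδval]
        omega
    obtain ⟨x1, hx1⟩ : ∃ t, t + (ls - 1) = x + B := ⟨x + B - (ls-1), by omega⟩
    obtain ⟨y1, hy1⟩ : ∃ t, t + A = y + ls := ⟨y + ls - A, by omega⟩
    obtain ⟨w1, hw1'⟩ : ∃ t, t + 1 = w := ⟨w - 1, by omega⟩
    have hls1 : 1 ≤ ls := by omega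
    -- membership
    have hmem : x1*a + y1*(a+1) + w1*c = m := by
      have hx1Z : (x1:ℤ) = x + B - ls + 1 := by
        have : (x1:ℤ) + ((ls:ℤ) - 1) = x + B := by exact_mod_cast hx1
        linarith
      have hy1Z : (y1:ℤ) = y + ls - A := by
        have : (y1:ℤ) + A = y + ls := by exact_mod_cast hy1
        linarith
      have hw1Z : (w1:ℤ) = w - 1 := by
        have : (w1:ℤ) + 1 = w := by exact_mod_cast hw1'
        linarith
      have hBZ : (B:ℤ) = ((a:ℤ)+1)*δ := by exact_mod_cast hB.symm
      have hAZ : (A:ℤ) = (a:ℤ)*δ := by exact_mod_cast hA.symm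
      have : (x1:ℤ)*a + y1*(a+1) + w1*c = m := by
        rw [hx1Z, hy1Z, hw1Z, hBZ, hAZ]
        linear_combination hmZ - hclsZ
      exact_mod_cast this
    -- length: x1+y1+w1 = x+y+w+δ
    have hlen : x1+y1+w1 = x+y+w+δ := by omega
    -- length ≤ target
    have hLup : x1+y1+w1 ≤ x'+y'+w' := by
      rcases Nat.eq_zero_or_pos δ with hδ0 | hδ0
      · omega
      · have haA : a*1 ≤ a*δ := Nat.mul_le_mul_left a hδ0
        rw [hA] at haA
        have hxls : x + 1 ≤ ls - 1 := by omega
        have hq : ((ls:ℤ) - 1 - x) ≤ ((a:ℤ)+1)*(((x':ℤ)+y'+w') - ((x:ℤ)+y+w)) := by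
          have hp2 : ((ls:ℤ)-1) ≤ ((w:ℤ) - w')*((ls:ℤ) - 1) :=
            le_mul_of_one_le_left (by
              have h7 : 7 ≤ ls := by omega
              have h7' : (7:ℤ) ≤ (ls:ℤ) := by exact_mod_cast h7
              linarith) hJ1
          linarith [hxid, hx'0]
        by_contra hcon
        have hXle : (((x':ℤ)+y'+w') - ((x:ℤ)+y+w)) ≤ (δ:ℤ) - 1 := by
          have h1 : (x':ℤ)+y'+w' ≤ (x:ℤ)+y+w+δ-1 := by
            push_cast
            have : x'+y'+w'+1 ≤ x+y+w+δ := by omega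
            have h2 : ((x':ℤ)+y'+w')+1 ≤ (x:ℤ)+y+w+δ := by exact_mod_cast this
            linarith
          linarith
        have hp1 : ((a:ℤ)+1)*(((x':ℤ)+y'+w') - ((x:ℤ)+y+w)) ≤ ((a:ℤ)+1)*((δ:ℤ)-1) :=
          mul_le_mul_of_nonneg_left hXle (by positivity)
        have hBZ : (B:ℤ) = ((a:ℤ)+1)*δ := by exact_mod_cast hB.symm
        have hBle : (B:ℤ) ≤ ((ls:ℤ) - 1 - x) + a := by
          have : B ≤ (ls - 1 - x) + a := hf1.2
          have h2 : (B:ℤ) ≤ ((ls - 1 - x : ℕ):ℤ) + a := by exact_mod_cast this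
          have h3 : ((ls - 1 - x : ℕ):ℤ) = (ls:ℤ) - 1 - x := by
            have : x ≤ ls - 1 := by omega
            omega
          linarith
        have : ((a:ℤ)+1)*((δ:ℤ)-1) = (B:ℤ) - (a+1) := by rw [hBZ]; ring
        linarith
    refine ⟨x1, y1, w1, hmem, by omega, by omega, by omega, hLup,
      (mem_facts hc).mpr hm, (mem_facts hc).mpr hmem, ?_, by rw [len_V, len_V]; omega⟩
    rw [dist_V]
    omega

end Core2

end Cat19

namespace Cat19

open Relation

set_option maxHeartbeats 1000000

section Core3

variable {a c ls m : ℕ}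

/-- Main increasing-chain construction. -/
theorem up_conn (ha : 4 ≤ a) (hc : c + (a + 1) = a * a) (hls : c = ls + a) :
    ∀ dw : ℕ, ∀ x y w x' y' w' : ℕ, (w - w') + (w' - w) = dw →
      (x*a + y*(a+1) + w*c = m) → (x'*a + y'*(a+1) + w'*c = m) →
      x+y+w ≤ x'+y'+w' →
      ReflTransGen (Rel (G19 a) m ls) (V x y w) (V x' y' w') := by
  have h4a : 4*a ≤ a*a := Nat.mul_le_mul_right a ha
  have hls2 : 2*a ≤ ls + 1 := by omega
  intro dw
  induction dw using Nat.strong_induction_on with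
  | _ dw ih =>
    intro x y w x' y' w' hdw hm hm' hL
    rcases lt_trichotomy w w' with hw | hw | hw
    · obtain ⟨hmem, hlen, hrel⟩ := raise_step ha hc hls hm hm' hw hL
      exact ReflTransGen.head hrel
        (ih ((w+1 - w') + (w' - (w+1))) (by omega) _ _ _ _ _ _ rfl hmem hm' (by omega))
    · subst hw
      exact trades ha hc (by omega) ((x'+y') - (x+y)) x y x' y' w hm hm' (by omega)
    · obtain ⟨x1, y1, w1, hmem, hw1, hw2, hL1, hL2, hrel⟩ :=
        lower_step ha hc hls hm hm' hw hL
      exact ReflTransGen.head hrel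
        (ih ((w1 - w') + (w' - w1)) (by omega) _ _ _ _ _ _ rfl hmem hm' hL2)

theorem mono_conn_le (ha : 4 ≤ a) (hc : c + (a + 1) = a * a) (hls : c = ls + a)
    {z z' : Fin 3 → ℕ} (hz : z ∈ Facts (G19 a) m) (hz' : z' ∈ Facts (G19 a) m)
    (hL : fLen z ≤ fLen z') : ConnectsMon (G19 a) m ls z z' := by
  rw [eta3 z] at hz
  rw [eta3 z'] at hz'
  rw [eta3 z, eta3 z'] at hL ⊢
  rw [len_V, len_V] at hL
  exact connectsMon_of_rtg hz
    (up_conn ha hc hls _ _ _ _ _ _ _ rfl ((mem_facts hc).mp hz) ((mem_facts hc).mp hz') hL)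

theorem mono_conn (ha : 4 ≤ a) (hc : c + (a + 1) = a * a) (hls : c = ls + a)
    {z z' : Fin 3 → ℕ} (hz : z ∈ Facts (G19 a) m) (hz' : z' ∈ Facts (G19 a) m) :
    ConnectsMon (G19 a) m ls z z' := by
  rcases le_total (fLen z) (fLen z') with hL | hL
  · exact mono_conn_le ha hc hls hz hz' hL
  · exact connectsMon_symm (mono_conn_le ha hc hls hz' hz hL)

/-- Descent to the ground level for the plain catenary degree. -/
theorem descend (ha : 4 ≤ a) (hc : c + (a + 1) = a * a) (hmc : m ≠ c) :
    ∀ w x y : ℕ, (x*a + y*(a+1) + w*c = m) →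
      ∃ x0 y0 : ℕ, (x0*a + y0*(a+1) + 0*c = m) ∧
        ReflTransGen (Rel (G19 a) m (2*a-3)) (V x y w) (V x0 y0 0) := by
  have h4a : 4*a ≤ a*a := Nat.mul_le_mul_right a ha
  intro w
  induction w using Nat.strong_induction_on with
  | _ w ih =>
    intro x y hm
    rcases Nat.eq_zero_or_pos w with hw0 | hw0
    · subst hw0; exact ⟨x, y, hm, ReflTransGen.refl⟩
    have hmZ : (x:ℤ)*a + y*(a+1) + w*c = m := by exact_mod_cast hm
    have hcZ : (c:ℤ) + (a+1) = (a:ℤ)*a := by exact_mod_cast hc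
    rcases Nat.eq_zero_or_pos x with hx0 | hx0
    · rcases Nat.eq_zero_or_pos y with hy0 | hy0
      · subst hx0; subst hy0
        rcases Nat.lt_or_ge w 2 with hw2 | hw2
        · exfalso
          have hw1 : w = 1 := by omega
          rw [hw1] at hm
          exact hmc (by omega)
        · have hmem : (a-1)*a + (a-2)*(a+1) + (w-2)*c = m := by
            zify [show 1 ≤ a by omega, show 2 ≤ a by omega, hw2]
            linear_combination hmZ - 2*hcZ
          obtain ⟨x0, y0, h0, hch⟩ := ih (w-2) (by omega) (a-1) (a-2) hmem
          refine ⟨x0, y0, h0, ReflTransGen.head ?_ hch⟩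
          exact ⟨(mem_facts hc).mpr hm, (mem_facts hc).mpr hmem,
            by rw [dist_V]; omega, by rw [len_V, len_V]; omega⟩
      · subst hx0
        have hmem : a*a + (y-1)*(a+1) + (w-1)*c = m := by
          zify [hy0, hw0]
          linear_combination hmZ - hcZ
        obtain ⟨x0, y0, h0, hch⟩ := ih (w-1) (by omega) a (y-1) hmem
        refine ⟨x0, y0, h0, ReflTransGen.head ?_ hch⟩
        refine ⟨(mem_facts hc).mpr hm, ?_, by rw [dist_V]; omega, by rw [len_V, len_V]; omega⟩
        refine (mem_facts hc).mpr ?_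
        calc a*a + (y-1)*(a+1) + (w-1)*c = a*a + (y-1)*(a+1) + (w-1)*c := rfl
        _ = m := hmem
    · have hmem : (x-1)*a + (y+(a-1))*(a+1) + (w-1)*c = m := by
        zify [hx0, hw0, show 1 ≤ a by omega]
        linear_combination hmZ - hcZ
      obtain ⟨x0, y0, h0, hch⟩ := ih (w-1) (by omega) (x-1) (y+(a-1)) hmem
      refine ⟨x0, y0, h0, ReflTransGen.head ?_ hch⟩
      exact ⟨(mem_facts hc).mpr hm, (mem_facts hc).mpr hmem,
        by rw [dist_V]; omega, by rw [len_V, len_V]; omega⟩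

/-- Unique factorization of the Frobenius-type element `c`. -/
theorem uniq_c (ha : 4 ≤ a) (hc : c + (a + 1) = a * a) {x y w : ℕ}
    (hm : x*a + y*(a+1) + w*c = c) : x = 0 ∧ y = 0 ∧ w = 1 := by
  have h4a : 4*a ≤ a*a := Nat.mul_le_mul_right a ha
  rcases Nat.lt_or_ge w 2 with hw2 | hw2
  · interval_cases w
    · exact absurd (by omega : x*a + y*(a+1) = c) (norep ha hc x y)
    · have hx : x*a = 0 := by omega
      have hy : y*(a+1) = 0 := by omega
      refine ⟨?_, ?_, rfl⟩
      · rcases Nat.mul_eq_zero.mp hx with h | h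
        · exact h
        · omega
      · rcases Nat.mul_eq_zero.mp hy with h | h
        · exact h
        · omega
  · exfalso
    have : 2*c ≤ w*c := Nat.mul_le_mul_right c hw2
    omega

/-- Connectivity with bound `2a-3`: the plain catenary degree. -/
theorem plain_conn (ha : 4 ≤ a) (hc : c + (a + 1) = a * a) (hls : c = ls + a)
    {z z' : Fin 3 → ℕ} (hz : z ∈ Facts (G19 a) m) (hz' : z' ∈ Facts (G19 a) m) :
    Connects (G19 a) m (2*a-3) z z' := by
  have h4a : 4*a ≤ a*a := Nat.mul_le_mul_right a ha
  rw [eta3 z] at hz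
  rw [eta3 z'] at hz'
  rw [eta3 z, eta3 z']
  have hm : (z 0)*a + (z 1)*(a+1) + (z 2)*c = m := (mem_facts hc).mp hz
  have hm' : (z' 0)*a + (z' 1)*(a+1) + (z' 2)*c = m := (mem_facts hc).mp hz'
  by_cases hmc : m = c
  · subst hmc
    obtain ⟨e1, e2, e3⟩ := uniq_c ha hc hm
    obtain ⟨e1', e2', e3'⟩ := uniq_c ha hc hm'
    rw [e1, e2, e3, e1', e2', e3']
    exact connects_of_rtg (by rw [e1, e2, e3] at hz; exact hz) ReflTransGen.refl
  · obtain ⟨x0, y0, h0, hch⟩ := descend ha hc hmc (z 2) (z 0) (z 1) hm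
    obtain ⟨x0', y0', h0', hch'⟩ := descend ha hc hmc (z' 2) (z' 0) (z' 1) hm'
    have hground : ReflTransGen (RelS (G19 a) m (2*a-3)) (V x0 y0 0) (V x0' y0' 0) := by
      rcases le_total (x0+y0) (x0'+y0') with hL | hL
      · exact ReflTransGen.mono (fun _ _ => rel_relS) _ _ (trades ha hc (by omega) ((x0'+y0') - (x0+y0)) x0 y0 x0' y0' 0 h0 h0'
          (by omega))
      · exact (@Std.Symm.symm _ _ (@ReflTransGen.stdSymm _ (RelS (G19 a) m (2*a-3)) ⟨fun _ _ h => RelS_symm _ _ _ h⟩) _ _)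
          (ReflTransGen.mono (fun _ _ => rel_relS) _ _ (trades ha hc (by omega) ((x0+y0) - (x0'+y0')) x0' y0' x0 y0 0 h0' h0
            (by omega)))
    refine connects_of_rtg hz ?_
    refine ReflTransGen.trans (ReflTransGen.mono (fun _ _ => rel_relS) _ _ hch) ?_
    refine ReflTransGen.trans hground ?_
    exact (@Std.Symm.symm _ _ (@ReflTransGen.stdSymm _ (RelS (G19 a) m (2*a-3)) ⟨fun _ _ h => RelS_symm _ _ _ h⟩) _ _) (ReflTransGen.mono (fun _ _ => rel_relS) _ _ hch')

end Core3

end Cat19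

namespace Cat19

open Relation

set_option maxHeartbeats 1000000

section Core4

variable {a c ls m : ℕ}

/-- If a chain's endpoints differ, some consecutive pair differs. -/
theorem exists_switch {α : Type*} {t : ℕ} {f : Fin (t+1) → α}
    (hne : f 0 ≠ f (Fin.last t)) : ∃ i : Fin t, f i.castSucc ≠ f i.succ := by
  by_contra hq
  push_neg at hq
  have hconst : ∀ j, f j = f 0 := by
    intro j
    induction j using Fin.induction with
    | zero => rfl
    | succ i ih => rw [← hq i]; exact ih
  exact hne (hconst (Fin.last t)).symm

/-- Lower bound from a two-element fiber for monotone chains with equal endpoint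
lengths. -/
theorem two_elt_lb_mon {k : ℕ} {n : Fin k → ℕ} {m N : ℕ} {u v : Fin k → ℕ}
    (huv : u ≠ v) (hlen : fLen u = fLen v)
    (honly : ∀ z ∈ Facts n m, fLen z = fLen u → z = u ∨ z = v)
    (hM : ConnectsMon n m N u v) : fDist u v ≤ N := by
  obtain ⟨t, f, h0, hl, hP, hMo, hQ⟩ := hM
  have hconst : ∀ i, fLen (f i) = fLen u := by
    intro i
    have h1 : (0 : Fin (t+1)) ≤ i := Fin.zero_le i
    have h2 : i ≤ Fin.last t := Fin.le_last i
    rcases hMo with hMo | hMo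
    · have a1 := hMo h1
      have a2 := hMo h2
      simp only [h0, hl] at a1 a2
      omega
    · have a1 := hMo h1
      have a2 := hMo h2
      simp only [h0, hl] at a1 a2
      omega
  have hin : ∀ i, f i = u ∨ f i = v := fun i => honly _ (hP i) (hconst i)
  obtain ⟨i, hne⟩ := exists_switch (f := f) (by rw [h0, hl]; exact huv)
  rcases hin i.castSucc with h1 | h1 <;> rcases hin i.succ with h2 | h2
  · exact absurd (h1.trans h2.symm) hne
  · have := hQ i; rwa [h1, h2] at this
  · have := hQ i; rw [h1, h2, fDist_comm] at this; exact this
  · exact absurd (h1.trans h2.symm) hne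

/-- Lower bound from a two-element fiber for plain chains. -/
theorem two_elt_lb {k : ℕ} {n : Fin k → ℕ} {m N : ℕ} {u v : Fin k → ℕ}
    (huv : u ≠ v) (honly : ∀ z ∈ Facts n m, z = u ∨ z = v)
    (hC : Connects n m N u v) : fDist u v ≤ N := by
  obtain ⟨t, f, h0, hl, hP, hQ⟩ := hC
  have hin : ∀ i, f i = u ∨ f i = v := fun i => honly _ (hP i)
  obtain ⟨i, hne⟩ := exists_switch (f := f) (by rw [h0, hl]; exact huv)
  rcases hin i.castSucc with h1 | h1 <;> rcases hin i.succ with h2 | h2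
  · exact absurd (h1.trans h2.symm) hne
  · have := hQ i; rwa [h1, h2] at this
  · have := hQ i; rw [h1, h2, fDist_comm] at this; exact this
  · exact absurd (h1.trans h2.symm) hne

/-- The only factorizations of `2c` are `(0,0,2)` and `(a-1,a-2,0)`. -/
theorem uniq_2c (ha : 4 ≤ a) (hc : c + (a + 1) = a * a) {x y w : ℕ}
    (hm : x*a + y*(a+1) + w*c = 2*c) :
    (x = 0 ∧ y = 0 ∧ w = 2) ∨ (x = a-1 ∧ y = a-2 ∧ w = 0) := by
  have h4a : 4*a ≤ a*a := Nat.mul_le_mul_right a ha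
  rcases Nat.lt_or_ge w 3 with hw3 | hw3
  · interval_cases w
    · -- ground: x*a + y*(a+1) = 2c
      right
      have hs : (x+y)*a + y = 2*c := by rw [← hm]; ring
      obtain ⟨P, hP⟩ : ∃ P, (x+y)*a = P := ⟨_, rfl⟩
      rw [hP] at hs
      have hsval : x + y = 2*a - 3 := by
        rcases Nat.lt_or_ge (x+y) (2*a-3) with h1 | h1
        · exfalso
          have h2 : (x+y)*a ≤ (2*a-4)*a := Nat.mul_le_mul_right a (by omega)
          have h3 : (2*a-4)*a + 4*a = 2*(a*a) := by
            zify [show 4 ≤ 2*a by omega]; ring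
          obtain ⟨Q, hQ⟩ : ∃ Q, (2*a-4)*a = Q := ⟨_, rfl⟩
          rw [hP, hQ] at h2; rw [hQ] at h3
          omega
        rcases Nat.lt_or_ge (2*a-3) (x+y) with h1' | h1'
        · exfalso
          have h2 : (2*a-2)*a ≤ (x+y)*a := Nat.mul_le_mul_right a (by omega)
          have h3 : (2*a-2)*a + 2*a = 2*(a*a) := by
            zify [show 2 ≤ 2*a by omega]; ring
          obtain ⟨Q, hQ⟩ : ∃ Q, (2*a-2)*a = Q := ⟨_, rfl⟩
          rw [hP, hQ] at h2; rw [hQ] at h3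
          omega
        · omega
      have h3 : (2*a-3)*a + 3*a = 2*(a*a) := by
        zify [show 3 ≤ 2*a by omega]; ring
      have hPval : P = (2*a-3)*a := by rw [← hP, hsval]
      obtain ⟨Q, hQ⟩ : ∃ Q, (2*a-3)*a = Q := ⟨_, rfl⟩
      rw [hQ] at h3 hPval
      omega
    · exact absurd (by omega : x*a + y*(a+1) = c) (norep ha hc x y)
    · left
      have hx : x*a = 0 := by omega
      have hy : y*(a+1) = 0 := by omega
      refine ⟨?_, ?_, rfl⟩
      · rcases Nat.mul_eq_zero.mp hx with h | h
        · exact h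
        · omega
      · rcases Nat.mul_eq_zero.mp hy with h | h
        · exact h
        · omega
  · exfalso
    have : 3*c ≤ w*c := Nat.mul_le_mul_right c hw3
    omega

/-- The only factorizations of `(a+1)*ls` of length `ls` are
`(0,ls,0)` and `(ls-1,0,1)`. -/
theorem uniq_m0 (ha : 4 ≤ a) (hc : c + (a + 1) = a * a) (hls : c = ls + a) {x y w : ℕ}
    (hm : x*a + y*(a+1) + w*c = (a+1)*ls) (hlen : x + y + w = ls) :
    (x = 0 ∧ y = ls ∧ w = 0) ∨ (x = ls-1 ∧ y = 0 ∧ w = 1) := by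
  have h4a : 4*a ≤ a*a := Nat.mul_le_mul_right a ha
  have hls2 : 2*a ≤ ls + 1 := by omega
  have hkey : y + w*ls = ls := by
    have hmZ : (x:ℤ)*a + y*(a+1) + w*c = ((a:ℤ)+1)*ls := by exact_mod_cast hm
    have hlZ : (x:ℤ) + y + w = ls := by exact_mod_cast hlen
    have hclsZ : (c:ℤ) = ls + a := by exact_mod_cast hls
    have : (y:ℤ) + w*ls = ls := by
      linear_combination hmZ - (a:ℤ)*hlZ - (w:ℤ)*hclsZ
    exact_mod_cast this
  rcases Nat.lt_or_ge w 2 with hw2 | hw2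
  · interval_cases w
    · left; omega
    · right; omega
  · exfalso
    have : 2*ls ≤ w*ls := Nat.mul_le_mul_right ls hw2
    omega

end Core4

end Cat19

namespace Cat19

open Relation

set_option maxHeartbeats 1000000

section Core5

variable {a c ls : ℕ}

theorem catMon_le (ha : 4 ≤ a) (hc : c + (a + 1) = a * a) (hls : c = ls + a) (m : ℕ) :
    catMon (G19 a) m ≤ ls :=
  Nat.sInf_le (fun _ hz _ hz' => mono_conn ha hc hls hz hz')

theorem catDeg_le (ha : 4 ≤ a) (hc : c + (a + 1) = a * a) (hls : c = ls + a) (m : ℕ) :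
    catDeg (G19 a) m ≤ 2*a-3 :=
  Nat.sInf_le (fun _ hz _ hz' => plain_conn ha hc hls hz hz')

theorem hu_mem (ha : 4 ≤ a) (hc : c + (a + 1) = a * a) (hls : c = ls + a) :
    V 0 ls 0 ∈ Facts (G19 a) ((a+1)*ls) :=
  (mem_facts hc).mpr (by ring)

theorem hv_mem (ha : 4 ≤ a) (hc : c + (a + 1) = a * a) (hls : c = ls + a) :
    V (ls-1) 0 1 ∈ Facts (G19 a) ((a+1)*ls) := by
  have h4a : 4*a ≤ a*a := Nat.mul_le_mul_right a ha
  have hls2 : 2*a ≤ ls + 1 := by omega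
  refine (mem_facts hc).mpr ?_
  have hclsZ : (c:ℤ) = ls + a := by exact_mod_cast hls
  zify [show 1 ≤ ls by omega]
  linear_combination hclsZ

theorem catMon_m0 (ha : 4 ≤ a) (hc : c + (a + 1) = a * a) (hls : c = ls + a) :
    catMon (G19 a) ((a+1)*ls) = ls := by
  have h4a : 4*a ≤ a*a := Nat.mul_le_mul_right a ha
  have hls2 : 2*a ≤ ls + 1 := by omega
  have hu := hu_mem ha hc hls
  have hv := hv_mem ha hc hls
  have hune : V 0 ls 0 ≠ V (ls-1) 0 1 := by
    intro h
    have h1 := congrFun h 1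
    simp only [V] at h1
    norm_num [Matrix.cons_val_one] at h1
    omega
  apply le_antisymm (catMon_le ha hc hls _)
  have hne : Set.Nonempty {N | ∀ z ∈ Facts (G19 a) ((a+1)*ls), ∀ z' ∈ Facts (G19 a) ((a+1)*ls),
      ConnectsMon (G19 a) ((a+1)*ls) N z z'} :=
    ⟨ls, fun _ hz _ hz' => mono_conn ha hc hls hz hz'⟩
  apply le_csInf hne
  rintro N hN
  have hC := hN _ hu _ hv
  have honly : ∀ z ∈ Facts (G19 a) ((a+1)*ls), fLen z = fLen (V 0 ls 0) →
      z = V 0 ls 0 ∨ z = V (ls-1) 0 1 := by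
    intro z hz hl
    rw [eta3 z] at hz
    rw [eta3 z, len_V] at hl
    rw [len_V] at hl
    have hm := (mem_facts hc).mp hz
    rcases uniq_m0 ha hc hls hm (by omega) with ⟨e1, e2, e3⟩ | ⟨e1, e2, e3⟩
    · left; rw [eta3 z, e1, e2, e3]
    · right; rw [eta3 z, e1, e2, e3]
  have hd := two_elt_lb_mon hune (by rw [len_V, len_V]; omega) honly hC
  rw [dist_V] at hd
  omega

theorem catDeg_2c (ha : 4 ≤ a) (hc : c + (a + 1) = a * a) (hls : c = ls + a) :
    catDeg (G19 a) (2*c) = 2*a-3 := by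
  have h4a : 4*a ≤ a*a := Nat.mul_le_mul_right a ha
  have hls2 : 2*a ≤ ls + 1 := by omega
  have hu : V 0 0 2 ∈ Facts (G19 a) (2*c) := (mem_facts hc).mpr (by ring)
  have hv : V (a-1) (a-2) 0 ∈ Facts (G19 a) (2*c) := by
    refine (mem_facts hc).mpr ?_
    have hcZ : (c:ℤ) + (a+1) = (a:ℤ)*a := by exact_mod_cast hc
    zify [show 1 ≤ a by omega, show 2 ≤ a by omega]
    linear_combination (-2 : ℤ)*hcZ
  have hune : V 0 0 2 ≠ V (a-1) (a-2) 0 := by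
    intro h
    have h1 := congrFun h 2
    simp only [V] at h1
    norm_num [Matrix.cons_val_fin_one] at h1
    simp at h1
  apply le_antisymm (catDeg_le ha hc hls _)
  have hne : Set.Nonempty {N | ∀ z ∈ Facts (G19 a) (2*c), ∀ z' ∈ Facts (G19 a) (2*c),
      Connects (G19 a) (2*c) N z z'} :=
    ⟨2*a-3, fun _ hz _ hz' => plain_conn ha hc hls hz hz'⟩
  apply le_csInf hne
  rintro N hN
  have hC := hN _ hu _ hv
  have honly : ∀ z ∈ Facts (G19 a) (2*c), z = V 0 0 2 ∨ z = V (a-1) (a-2) 0 := by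
    intro z hz
    rw [eta3 z] at hz
    have hm := (mem_facts hc).mp hz
    rcases uniq_2c ha hc hm with ⟨e1, e2, e3⟩ | ⟨e1, e2, e3⟩
    · left; rw [eta3 z, e1, e2, e3]
    · right; rw [eta3 z, e1, e2, e3]
  have hd := two_elt_lb hune honly hC
  rw [dist_V] at hd
  omega

theorem catMonM_eq (ha : 4 ≤ a) (hc : c + (a + 1) = a * a) (hls : c = ls + a) :
    catMonM (G19 a) = ls := by
  have hbound : ∀ b ∈ catMon (G19 a) '' {m | (Facts (G19 a) m).Nonempty}, b ≤ ls := by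
    rintro b ⟨m, _, rfl⟩
    exact catMon_le ha hc hls m
  have hmem : ls ∈ catMon (G19 a) '' {m | (Facts (G19 a) m).Nonempty} :=
    ⟨(a+1)*ls, ⟨V 0 ls 0, hu_mem ha hc hls⟩, catMon_m0 ha hc hls⟩
  exact le_antisymm (csSup_le ⟨ls, hmem⟩ hbound) (le_csSup ⟨ls, hbound⟩ hmem)

theorem catDegM_eq (ha : 4 ≤ a) (hc : c + (a + 1) = a * a) (hls : c = ls + a) :
    catDegM (G19 a) = 2*a-3 := by
  have hbound : ∀ b ∈ catDeg (G19 a) '' {m | (Facts (G19 a) m).Nonempty}, b ≤ 2*a-3 := by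
    rintro b ⟨m, _, rfl⟩
    exact catDeg_le ha hc hls m
  have hmem : 2*a-3 ∈ catDeg (G19 a) '' {m | (Facts (G19 a) m).Nonempty} :=
    ⟨2*c, ⟨V 0 0 2, (mem_facts hc).mpr (by ring)⟩, catDeg_2c ha hc hls⟩
  exact le_antisymm (csSup_le ⟨2*a-3, hmem⟩ hbound) (le_csSup ⟨2*a-3, hbound⟩ hmem)

end Core5

end Cat19

/-- For `Mₐ = ⟨a, a+1, a²-a-1⟩` with `a ≥ 4`,
`c_mon(Mₐ) = a² - 2a - 1` and `c(Mₐ) = 2a - 3`, so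
`c_mon(Mₐ) - c(Mₐ) = a² - 4a + 2`; hence the difference between the monotone
and regular catenary degrees of a numerical monoid can be arbitrarily large. -/
theorem difference_arbitrarily_large :
    (∀ a : ℕ, 4 ≤ a →
      catMonM (G19 a) = a * a - 2 * a - 1 ∧
      catDegM (G19 a) = 2 * a - 3 ∧
      catMonM (G19 a) - catDegM (G19 a) = a * a - 4 * a + 2) ∧
    (∀ N : ℕ, ∃ (k : ℕ) (n : Fin k → ℕ),
      (∀ i, 0 < n i) ∧ Finset.univ.gcd n = 1 ∧
      N < catMonM n - catDegM n) := by
  have main : ∀ a : ℕ, 4 ≤ a →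
      catMonM (G19 a) = a * a - 2 * a - 1 ∧
      catDegM (G19 a) = 2 * a - 3 ∧
      catMonM (G19 a) - catDegM (G19 a) = a * a - 4 * a + 2 := by
    intro a ha
    have h4a : 4*a ≤ a*a := Nat.mul_le_mul_right a ha
    have hc : (a*a - a - 1) + (a + 1) = a * a := by omega
    have hls : a*a - a - 1 = (a*a - 2*a - 1) + a := by omega
    have e1 := Cat19.catMonM_eq ha hc hls
    have e2 := Cat19.catDegM_eq ha hc hls
    exact ⟨e1, e2, by rw [e1, e2]; omega⟩
  refine ⟨main, ?_⟩
  intro N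
  refine ⟨3, G19 (N+5), ?_, ?_, ?_⟩
  · intro i
    have h4a : 4*(N+5) ≤ (N+5)*(N+5) := Nat.mul_le_mul_right _ (by omega)
    fin_cases i <;> simp [G19] <;> omega
  · have h0 : Finset.univ.gcd (G19 (N+5)) ∣ G19 (N+5) 0 :=
      Finset.gcd_dvd (Finset.mem_univ 0)
    have h1 : Finset.univ.gcd (G19 (N+5)) ∣ G19 (N+5) 1 :=
      Finset.gcd_dvd (Finset.mem_univ 1)
    have e0 : G19 (N+5) 0 = N+5 := rfl
    have e1 : G19 (N+5) 1 = N+6 := rfl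
    rw [e0] at h0
    rw [e1] at h1
    have h2 := Nat.dvd_sub h1 h0
    have h3 : N+6 - (N+5) = 1 := by omega
    rw [h3] at h2
    exact Nat.dvd_one.mp h2
  · obtain ⟨e1, e2, e3⟩ := main (N+5) (by omega)
    rw [e1, e2]
    have h5 : (N+5)*(N+5) = N*N + 10*N + 25 := by ring
    omega
end
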